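/- Let $r \ge 3$, $n \in \mathbb{N}$, and $\delta = 1/(600 r^{3/2})$. Let $G$ be a graph on $n$ vertices with $\delta(G) \ge (1-\delta)n$, and let $X \subseteq V(G)$ with $|X| \le \delta r n$. Then the number of $r$-cliques $K$ of $G$ with $|V(K) \cap X| \ge r^{1/2}$ is at most $k_r / r^2$. -/

import Mathlib

open Finset
open scoped Classical Nat

/-!
Put `ε = 1 / (600 √r)` (so `|X| ≤ ε n` and every vertex misses at most `ε n / r` others) and
`t = ⌈√r⌉`. A `j`-clique has at least `n - j (n - δ(G))` common neighbours, and every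
`(j+1)`-clique arises from exactly `j + 1` such extensions, so `r! k_r ≥ ((1 - ε) n)^r`.
A clique with at least `√r` vertices in `X` contains a `t`-subset of `X`, so there are at most
`C(|X|, t) C(n, r - t) ≤ C(r, t) ε^t n^r / r!` of them. It remains to check
`C(r, t) ε^t r² ≤ (1 - ε)^r`: the left side is at most `(e/600)^t r² ≤ e^{-5t} e^{4(t-1)}`,
while `(1 - ε)^r ≥ e^{-2εr} = e^{-√r/300}`.
-/

namespace Nat

theorem choose_le_exp_one_mul_div_pow (n k : ℕ) :
    (n.choose k : ℝ) ≤ (Real.exp 1 * n / k) ^ k := by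
  rcases k.eq_zero_or_pos with rfl | hk
  · simp
  have hk' : (0 : ℝ) < k := by exact_mod_cast hk
  have hfact : (k : ℝ) ^ k / k ! ≤ Real.exp k := Real.pow_div_factorial_le_exp (x := k) hk'.le k
  calc (n.choose k : ℝ) ≤ n ^ k / k ! := choose_le_pow_div k n
    _ = (n / k) ^ k * ((k : ℝ) ^ k / k !) := by rw [div_pow]; field_simp
    _ ≤ (n / k) ^ k * Real.exp 1 ^ k := by rw [Real.exp_one_pow]; gcongr
    _ = (Real.exp 1 * n / k) ^ k := by ring

end Nat

namespace Real

theorem exp_neg_two_mul_le_one_sub {x : ℝ} (hx₀ : 0 ≤ x) (hx : x ≤ 1 / 2) :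
    exp (-(2 * x)) ≤ 1 - x := by
  have h : 1 ≤ (1 - x) * exp (2 * x) := calc
    1 ≤ (1 - x) * (2 * x + 1) := by nlinarith
    _ ≤ (1 - x) * exp (2 * x) :=
      mul_le_mul_of_nonneg_left (by linarith [add_one_le_exp (2 * x)]) (by linarith)
  rw [exp_neg, inv_le_iff_one_le_mul₀ (exp_pos _)]
  exact h

theorem exp_one_div_six_hundred_le : exp 1 / 600 ≤ exp (-5) := by
  have h6 : exp 6 ≤ 600 := calc
    exp 6 = exp 1 ^ 6 := by rw [exp_one_pow]; norm_num
    _ ≤ 2.7182818286 ^ 6 := by gcongr; exact exp_one_lt_d9.le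
    _ ≤ 600 := by norm_num
  have h1 : exp 1 = exp 6 * exp (-5) := by rw [← exp_add]; norm_num
  rw [div_le_iff₀ (by norm_num), h1, mul_comm]
  gcongr

end Real

open Real in
theorem choose_ceil_sqrt_mul_pow_mul_sq_le {r : ℕ} (hr : r ≠ 0) :
    (r.choose ⌈√r⌉₊ : ℝ) * (1 / (600 * √r)) ^ ⌈√r⌉₊ * r ^ 2 ≤
      (1 - 1 / (600 * √r)) ^ r := by
  set s := √(r : ℝ)
  set t := ⌈s⌉₊
  set ε := 1 / (600 * s)
  have hs_sq : s ^ 2 = r := sq_sqrt (Nat.cast_nonneg r)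
  have hs₁ : 1 ≤ s := one_le_sqrt.2 (by exact_mod_cast Nat.one_le_iff_ne_zero.2 hr)
  have hst : s ≤ t := Nat.le_ceil s
  have hε_mul : r * ε = s / 600 := by rw [← hs_sq, show ε = 1 / (600 * s) from rfl]; field_simp
  have h_choose : (r.choose t : ℝ) * ε ^ t ≤ exp (-5) ^ t := calc
    (r.choose t : ℝ) * ε ^ t ≤ (exp 1 * r / t) ^ t * ε ^ t := by
      gcongr; exact Nat.choose_le_exp_one_mul_div_pow r t
    _ = (exp 1 / 600 * (s / t)) ^ t := by
      rw [← mul_pow, mul_div_right_comm, mul_assoc, hε_mul]; ring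
    _ ≤ (exp 1 / 600) ^ t := by
      gcongr
      exact mul_le_of_le_one_right (by positivity) (div_le_one_of_le₀ hst (by positivity))
    _ ≤ exp (-5) ^ t := by gcongr; exact exp_one_div_six_hundred_le
  have h_sq : (r : ℝ) ^ 2 ≤ exp (t - 1) ^ 4 := calc
    (r : ℝ) ^ 2 = s ^ 4 := by rw [← hs_sq]; ring
    _ ≤ (t : ℝ) ^ 4 := by gcongr
    _ ≤ exp (t - 1) ^ 4 := by gcongr; linarith [add_one_le_exp ((t : ℝ) - 1)]
  have h_exp : exp (-(s / 300)) ≤ (1 - ε) ^ r := calc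
    exp (-(s / 300)) = exp (-(2 * ε)) ^ r := by
      rw [← exp_nat_mul]; congr 1; linarith
    _ ≤ (1 - ε) ^ r := by
      have hε : ε ≤ 1 / 2 := by
        rw [div_le_div_iff₀ (by positivity) (by norm_num)]; linarith
      gcongr
      exact exp_neg_two_mul_le_one_sub (by positivity) hε
  calc (r.choose t : ℝ) * ε ^ t * r ^ 2 ≤ exp (-5) ^ t * exp (t - 1) ^ 4 := by gcongr
    _ = exp (-(t + 4)) := by rw [← exp_nat_mul, ← exp_nat_mul, ← exp_add]; congr 1; ring
    _ ≤ exp (-(s / 300)) := by gcongr; linarith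
    _ ≤ (1 - ε) ^ r := h_exp

theorem card_powersetCard_filter_le_card_inter_le {α : Type*} [Fintype α] (X : Finset α)
    {r t : ℕ} (htr : t ≤ r) :
    #{K ∈ (univ : Finset α).powersetCard r | t ≤ #(K ∩ X)} ≤
      (#X).choose t * (Fintype.card α).choose (r - t) :=
  calc #{K ∈ univ.powersetCard r | t ≤ #(K ∩ X)}
      ≤ #((X.powersetCard t).biUnion fun S ↦ {K ∈ univ.powersetCard r | S ⊆ K}) := by
        refine card_le_card fun K hK ↦ ?_
        rw [mem_filter] at hK
        obtain ⟨S, hSK, hS⟩ := exists_subset_card_eq hK.2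
        exact mem_biUnion.2 ⟨S, mem_powersetCard.2 ⟨hSK.trans inter_subset_right, hS⟩,
          mem_filter.2 ⟨hK.1, hSK.trans inter_subset_left⟩⟩
    _ ≤ ∑ S ∈ X.powersetCard t, #{K ∈ univ.powersetCard r | S ⊆ K} := card_biUnion_le
    _ ≤ ∑ _S ∈ X.powersetCard t, (Fintype.card α).choose (r - t) := by
        refine sum_le_sum fun S hS ↦ ?_
        have hS : #S = t := (mem_powersetCard.1 hS).2
        rw [card_filter_powersetCard_subset S univ r (subset_univ S) (hS ▸ htr), card_univ, hS]
        exact Nat.choose_le_choose _ (Nat.sub_le _ _)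
    _ = (#X).choose t * (Fintype.card α).choose (r - t) := by
        rw [sum_const, card_powersetCard, smul_eq_mul]

namespace SimpleGraph

variable {V : Type*} [Fintype V] (G : SimpleGraph V)

theorem minDegree_le_card : G.minDegree ≤ Fintype.card V := by
  cases isEmpty_or_nonempty V
  · simp
  · exact G.minDegree_lt_card.le

noncomputable def commonNeighborFinset (L : Finset V) : Finset V := {v | ∀ u ∈ L, G.Adj u v}

theorem card_sub_mul_le_card_commonNeighborFinset (L : Finset V) :
    Fintype.card V - #L * (Fintype.card V - G.minDegree) ≤ #(G.commonNeighborFinset L) := by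
  have h_compl : (G.commonNeighborFinset L)ᶜ ⊆ L.biUnion fun u ↦ (G.neighborFinset u)ᶜ := by
    intro v hv
    simp only [commonNeighborFinset, mem_compl, mem_filter, mem_univ, true_and, not_forall] at hv
    obtain ⟨u, hu, hadj⟩ := hv
    exact mem_biUnion.2 ⟨u, hu, by simpa using hadj⟩
  have h_card : #(G.commonNeighborFinset L)ᶜ ≤ #L * (Fintype.card V - G.minDegree) :=
    calc _ ≤ ∑ u ∈ L, #(G.neighborFinset u)ᶜ := (card_le_card h_compl).trans card_biUnion_le
      _ ≤ ∑ _u ∈ L, (Fintype.card V - G.minDegree) := by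
        gcongr with u
        rw [card_compl, card_neighborFinset_eq_degree]
        exact Nat.sub_le_sub_left (G.minDegree_le_degree u) _
      _ = _ := by rw [sum_const, smul_eq_mul]
  rw [card_compl] at h_card
  omega

theorem card_cliqueFinset_mul_le (j : ℕ) :
    #(G.cliqueFinset j) * (Fintype.card V - j * (Fintype.card V - G.minDegree)) ≤
      (j + 1) * #(G.cliqueFinset (j + 1)) := by
  calc #(G.cliqueFinset j) * (Fintype.card V - j * (Fintype.card V - G.minDegree))
      ≤ ∑ L ∈ G.cliqueFinset j, #(G.commonNeighborFinset L) := by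
        rw [← smul_eq_mul, ← sum_const]
        refine sum_le_sum fun L hL ↦ ?_
        rw [← (mem_cliqueFinset_iff.1 hL).card_eq]
        exact G.card_sub_mul_le_card_commonNeighborFinset L
    _ = #((G.cliqueFinset j).sigma G.commonNeighborFinset) := (card_sigma _ _).symm
    _ ≤ #((G.cliqueFinset (j + 1)).sigma fun M ↦ M) := by
      refine card_le_card_of_injOn (fun p ↦ ⟨insert p.2 p.1, p.2⟩) ?_ ?_
      · rintro ⟨L, v⟩ hp
        simp only [coe_sigma, Set.mem_sigma_iff, mem_coe, mem_cliqueFinset_iff,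
          commonNeighborFinset, mem_filter, mem_univ, true_and] at hp ⊢
        exact ⟨hp.1.insert fun u hu ↦ (hp.2 u hu).symm, mem_insert_self v L⟩
      · rintro ⟨L, v⟩ hp ⟨L', v'⟩ hp' h
        simp only [coe_sigma, Set.mem_sigma_iff, mem_coe, commonNeighborFinset, mem_filter,
          mem_univ, true_and] at hp hp'
        simp only [Sigma.mk.injEq, heq_eq_eq] at h ⊢
        obtain ⟨hL, rfl⟩ := h
        have hv : v ∉ L := fun hv ↦ G.irrefl (hp.2 v hv)
        have hv' : v ∉ L' := fun hv ↦ G.irrefl (hp'.2 v hv)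
        exact ⟨by rw [← erase_insert hv, hL, erase_insert hv'], rfl⟩
    _ = (j + 1) * #(G.cliqueFinset (j + 1)) := by
      rw [card_sigma, sum_const_nat fun M hM ↦ (mem_cliqueFinset_iff.1 hM).card_eq, mul_comm]

-- `ℕ`-subtraction truncates each factor at `0`.
theorem prod_range_le_factorial_mul_card_cliqueFinset (j : ℕ) :
    ∏ i ∈ range j, (Fintype.card V - i * (Fintype.card V - G.minDegree)) ≤
      j ! * #(G.cliqueFinset j) := by
  induction j with
  | zero => simp [cliqueFinset, isNClique_zero, filter_eq']
  | succ j ih =>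
    calc ∏ i ∈ range (j + 1), (Fintype.card V - i * (Fintype.card V - G.minDegree))
        ≤ j ! * #(G.cliqueFinset j) * (Fintype.card V - j * (Fintype.card V - G.minDegree)) := by
          rw [prod_range_succ]; gcongr
      _ ≤ j ! * ((j + 1) * #(G.cliqueFinset (j + 1))) := by
          rw [mul_assoc]; exact Nat.mul_le_mul_left _ (G.card_cliqueFinset_mul_le j)
      _ = (j + 1)! * #(G.cliqueFinset (j + 1)) := by rw [Nat.factorial_succ]; ring

theorem pow_le_factorial_mul_card_cliqueFinset (r : ℕ) :
    (Fintype.card V - r * (Fintype.card V - G.minDegree)) ^ r ≤ r ! * #(G.cliqueFinset r) := by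
  refine le_trans ?_ (G.prod_range_le_factorial_mul_card_cliqueFinset r)
  simpa using pow_card_le_prod (range r) _ _ fun i hi ↦
    Nat.sub_le_sub_left (Nat.mul_le_mul_right _ (mem_range.1 hi).le) _

theorem card_filter_le_card_inter_mul_factorial_le {X : Finset V} {ε : ℝ}
    (hX : (#X : ℝ) ≤ ε * Fintype.card V) {r t : ℕ} (htr : t ≤ r) :
    (#{K ∈ G.cliqueFinset r | t ≤ #(K ∩ X)} : ℝ) * r ! ≤
      r.choose t * ε ^ t * Fintype.card V ^ r := by
  have h_sub : {K ∈ G.cliqueFinset r | t ≤ #(K ∩ X)} ⊆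
      {K ∈ (univ : Finset V).powersetCard r | t ≤ #(K ∩ X)} :=
    filter_subset_filter _ fun K hK ↦
      mem_powersetCard_univ.2 (mem_cliqueFinset_iff.1 hK).card_eq
  have h_card : (#{K ∈ G.cliqueFinset r | t ≤ #(K ∩ X)} : ℝ) ≤
      (#X).choose t * (Fintype.card V).choose (r - t) := by
    exact_mod_cast (card_le_card h_sub).trans (card_powersetCard_filter_le_card_inter_le X htr)
  have hεn : 0 ≤ ε * Fintype.card V := (Nat.cast_nonneg _).trans hX
  have h_choose_X : ((#X).choose t : ℝ) ≤ (ε * Fintype.card V) ^ t / t ! :=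
    (Nat.choose_le_pow_div t #X).trans (by gcongr)
  have h_choose_V : ((Fintype.card V).choose (r - t) : ℝ) ≤
      Fintype.card V ^ (r - t) / (r - t)! :=
    Nat.choose_le_pow_div _ _
  calc (#{K ∈ G.cliqueFinset r | t ≤ #(K ∩ X)} : ℝ) * r !
      ≤ ((ε * Fintype.card V) ^ t / t !) * (Fintype.card V ^ (r - t) / (r - t)!) * r ! := by
        gcongr
        exact h_card.trans (by gcongr)
    _ = r.choose t * ε ^ t * Fintype.card V ^ r := by
        rw [← Nat.choose_mul_factorial_mul_factorial htr, ← Nat.add_sub_of_le htr, pow_add,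
          Nat.add_sub_cancel_left]
        push_cast
        field_simp
        ring

theorem one_sub_mul_mul_card_pow_le_factorial_mul_card_cliqueFinset {δ : ℝ}
    (hmin : (1 - δ) * Fintype.card V ≤ G.minDegree) {r : ℕ} (hrδ : r * δ ≤ 1) :
    ((1 - r * δ) * Fintype.card V) ^ r ≤ r ! * #(G.cliqueFinset r) := by
  have h_deficit : ((Fintype.card V - G.minDegree : ℕ) : ℝ) ≤ δ * Fintype.card V := by
    rw [Nat.cast_sub G.minDegree_le_card]
    linarith
  have h_trunc : (Fintype.card V : ℝ) ≤
      ((Fintype.card V - r * (Fintype.card V - G.minDegree) : ℕ) : ℝ) +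
        r * ((Fintype.card V - G.minDegree : ℕ) : ℝ) := by
    exact_mod_cast (by omega : Fintype.card V ≤
      (Fintype.card V - r * (Fintype.card V - G.minDegree)) + r * (Fintype.card V - G.minDegree))
  calc ((1 - r * δ) * Fintype.card V) ^ r
      ≤ ((Fintype.card V - r * (Fintype.card V - G.minDegree) : ℕ) : ℝ) ^ r := by
        gcongr
        nlinarith [mul_le_mul_of_nonneg_left h_deficit (Nat.cast_nonneg (α := ℝ) r)]
    _ ≤ r ! * #(G.cliqueFinset r) := by
        exact_mod_cast G.pow_le_factorial_mul_card_cliqueFinset r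

end SimpleGraph

/-- Proposition 4.3: few r-cliques have many vertices in a small set X. -/
theorem stmt_6 {V : Type*} [Fintype V] (r : ℕ) (hr : 3 ≤ r)
    (G : SimpleGraph V)
    (hmin : (1 - 1/(600*(r:ℝ)^((3:ℝ)/2))) * (Fintype.card V : ℝ) ≤ (G.minDegree : ℝ))
    (X : Finset V)
    (hX : (X.card : ℝ) ≤ (1/(600*(r:ℝ)^((3:ℝ)/2))) * (r:ℝ) * (Fintype.card V : ℝ)) :
    ((((G.cliqueFinset r).filter
        (fun K => Real.sqrt r ≤ ((K ∩ X).card : ℝ))).card : ℝ)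
      ≤ ((G.cliqueFinset r).card : ℝ) / (r:ℝ)^2) := by
  set t := ⌈√(r : ℝ)⌉₊
  set ε := 1 / (600 * √(r : ℝ)) with hε_def
  have hr₁ : (1 : ℝ) ≤ r := by exact_mod_cast (by omega : 1 ≤ r)
  have hε : r * (1 / (600 * (r : ℝ) ^ ((3 : ℝ) / 2))) = ε := by
    rw [show (3 : ℝ) / 2 = 1 + 1 / 2 by norm_num, Real.rpow_add (by positivity), Real.rpow_one,
      ← Real.sqrt_eq_rpow, hε_def]
    field_simp
  have hε₁ : ε ≤ 1 := by
    rw [div_le_one (by positivity)]; nlinarith [Real.one_le_sqrt.2 hr₁]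
  have htr : t ≤ r := Nat.ceil_le.2 <| Real.sqrt_le_iff.2 ⟨by positivity, by nlinarith⟩
  have h_bad : (#{K ∈ G.cliqueFinset r | √r ≤ (#(K ∩ X) : ℝ)} : ℝ) * r ! ≤
      r.choose t * ε ^ t * Fintype.card V ^ r :=
    calc _ ≤ (#{K ∈ G.cliqueFinset r | t ≤ #(K ∩ X)} : ℝ) * r ! := by
          gcongr; exact Nat.ceil_le.2
      _ ≤ _ := G.card_filter_le_card_inter_mul_factorial_le (by rw [← hε]; linarith) htr
  have h_cliques := G.one_sub_mul_mul_card_pow_le_factorial_mul_card_cliqueFinset hmin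
    (hε.symm ▸ hε₁)
  rw [hε] at h_cliques
  rw [le_div_iff₀ (by positivity)]
  refine le_of_mul_le_mul_right ?_ (by positivity : (0 : ℝ) < r !)
  calc (#{K ∈ G.cliqueFinset r | √r ≤ (#(K ∩ X) : ℝ)} : ℝ) * r ^ 2 * r !
      = #{K ∈ G.cliqueFinset r | √r ≤ (#(K ∩ X) : ℝ)} * r ! * r ^ 2 := by ring
    _ ≤ r.choose t * ε ^ t * r ^ 2 * Fintype.card V ^ r := by
        rw [mul_right_comm _ (r ^ 2 : ℝ)]; gcongr
    _ ≤ ((1 - ε) * Fintype.card V) ^ r := by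
        rw [mul_pow]; gcongr; exact choose_ceil_sqrt_mul_pow_mul_sq_le (by omega)
    _ ≤ r ! * #(G.cliqueFinset r) := h_cliques
    _ = #(G.cliqueFinset r) * r ! := mul_comm _ _
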